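/- arXiv:2108.13348 — 2 statements merged into one kernel-verified Lean document; each statement's English description precedes it below -/
import Mathlib

section
/- For a chi-squared random variable X with n degrees of freedom, for any x > 0, the probability that X - n ≥ 2√(nx) + 2x is at most e^{-x}. -/
/-!
Chernoff's method. For `2t < 1` a standard Gaussian `g` has `𝔼 exp (t g²) = (1 - 2t)^(-1/2)`,
so independence gives `ℙ (∑ gᵢ² ≥ n + a) ≤ exp (-t (n + a) - (n / 2) log (1 - 2t))`.
Applying `u ≤ sinh u` to `u = -log (1 - 2t)` bounds the log-Laplace transform of `g² - 1` by
`t² / (1 - 2t)`, and for `a = 2√(nx) + 2x` the choice `t = √x / (√n + 2√x)` makes the exponent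
`n t² / (1 - 2t) - t a` equal to `-x`.
-/

open MeasureTheory ProbabilityTheory Real
open scoped NNReal

namespace ProbabilityTheory

variable {v : ℝ≥0} {t : ℝ}

lemma integral_exp_mul_sq_gaussianReal (ht : 2 * v * t < 1) :
    ∫ y, exp (t * y ^ 2) ∂gaussianReal 0 v = (√(1 - 2 * v * t))⁻¹ := by
  rcases eq_or_ne v 0 with rfl | hv
  · simp
  have hv' : (0 : ℝ) < v := by positivity
  have hb : 0 < 1 - 2 * v * t := by linarith
  have hpdf : ∀ y, gaussianPDFReal 0 v y • exp (t * y ^ 2)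
      = (√(2 * π * v))⁻¹ * exp (-((1 - 2 * v * t) / (2 * v)) * y ^ 2) := by
    intro y
    rw [gaussianPDFReal, smul_eq_mul, mul_assoc, ← exp_add]
    congr 2
    field_simp
    ring
  rw [integral_gaussianReal_eq_integral_smul hv]
  simp_rw [hpdf]
  rw [integral_const_mul, integral_gaussian, div_div_eq_mul_div, sqrt_div (by positivity),
    show π * (2 * v) = 2 * π * v by ring]
  field_simp

variable {Ω : Type*} {mΩ : MeasurableSpace Ω} {μ : Measure Ω} {X : Ω → ℝ}

lemma mgf_sq_of_map_eq_gaussianReal (hX : AEMeasurable X μ) (hgauss : μ.map X = gaussianReal 0 v)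
    (ht : 2 * v * t < 1) :
    mgf (fun ω ↦ X ω ^ 2) μ t = (√(1 - 2 * v * t))⁻¹ := by
  rw [← integral_exp_mul_sq_gaussianReal ht, ← hgauss]
  exact (mgf_map (X := fun y ↦ y ^ 2) hX (by fun_prop)).symm

lemma integrable_exp_mul_sq_of_map_eq_gaussianReal (hX : AEMeasurable X μ)
    (hgauss : μ.map X = gaussianReal 0 v) (ht : 2 * v * t < 1) :
    Integrable (fun ω ↦ exp (t * X ω ^ 2)) μ := by
  refine Integrable.of_integral_ne_zero ?_
  rw [← mgf, mgf_sq_of_map_eq_gaussianReal hX hgauss ht]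
  exact (inv_pos.2 (sqrt_pos.2 (by linarith))).ne'

lemma cgf_sq_of_map_eq_gaussianReal (hX : AEMeasurable X μ) (hgauss : μ.map X = gaussianReal 0 v)
    (ht : 2 * v * t < 1) :
    cgf (fun ω ↦ X ω ^ 2) μ t = -log (1 - 2 * v * t) / 2 := by
  rw [cgf, mgf_sq_of_map_eq_gaussianReal hX hgauss ht, log_inv, log_sqrt (by linarith), neg_div]

theorem iIndepFun.measureReal_sum_sq_ge_le {ι : Type*} {g : ι → Ω → ℝ} (hindep : iIndepFun g μ)
    (hmeas : ∀ i, Measurable (g i)) (hgauss : ∀ i, μ.map (g i) = gaussianReal 0 v)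
    (s : Finset ι) (ε : ℝ) (ht0 : 0 ≤ t) (ht : 2 * v * t < 1) :
    μ.real {ω | ε ≤ ∑ i ∈ s, g i ω ^ 2}
      ≤ exp (-t * ε - s.card * log (1 - 2 * v * t) / 2) := by
  have := hindep.isProbabilityMeasure
  have hsq : iIndepFun (fun i ω ↦ g i ω ^ 2) μ := hindep.comp _ fun _ ↦ measurable_id.pow_const 2
  have hint i : Integrable (fun ω ↦ exp (t * g i ω ^ 2)) μ :=
    integrable_exp_mul_sq_of_map_eq_gaussianReal (hmeas i).aemeasurable (hgauss i) ht
  have h := measure_ge_le_exp_cgf ε ht0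
    (hsq.integrable_exp_mul_sum (s := s) (by fun_prop) fun i _ ↦ hint i)
  rw [hsq.cgf_sum (by fun_prop) fun i _ ↦ hint i] at h
  simp_rw [cgf_sq_of_map_eq_gaussianReal (hmeas _).aemeasurable (hgauss _) ht] at h
  simpa [Finset.sum_apply, sub_eq_add_neg, mul_div_assoc, neg_div] using h

end ProbabilityTheory

lemma Real.neg_log_le_inv_sub_div_two {w : ℝ} (hw0 : 0 < w) (hw1 : w ≤ 1) :
    -log w ≤ (w⁻¹ - w) / 2 := by
  have h := self_le_sinh_iff.mpr (neg_nonneg.mpr (log_nonpos hw0.le hw1))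
  rwa [sinh_eq, neg_neg, exp_neg, exp_log hw0] at h

lemma exists_chiSq_chernoff_exponent_le {n x : ℝ} (hn : 0 < n) (hx : 0 < x) :
    ∃ t, 0 ≤ t ∧ 2 * t < 1 ∧
      -t * (n + (2 * √(n * x) + 2 * x)) - n * log (1 - 2 * t) / 2 ≤ -x := by
  obtain ⟨s, hs, rfl⟩ : ∃ s, 0 < s ∧ n = s ^ 2 := ⟨√n, sqrt_pos.2 hn, (sq_sqrt hn.le).symm⟩
  obtain ⟨r, hr, rfl⟩ : ∃ r, 0 < r ∧ x = r ^ 2 := ⟨√x, sqrt_pos.2 hx, (sq_sqrt hx.le).symm⟩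
  have hsr : 0 < s + 2 * r := by positivity
  have hw : 1 - 2 * (r / (s + 2 * r)) = s / (s + 2 * r) := by field_simp; ring
  refine ⟨r / (s + 2 * r), by positivity, by rw [mul_div_assoc', div_lt_one hsr]; linarith, ?_⟩
  have hlog := neg_log_le_inv_sub_div_two (w := s / (s + 2 * r)) (by positivity)
    (by rw [div_le_one hsr]; linarith)
  rw [← mul_pow, sqrt_sq (by positivity), hw]
  calc _ ≤ -(r / (s + 2 * r)) * (s ^ 2 + (2 * (s * r) + 2 * r ^ 2))
        + s ^ 2 * (((s / (s + 2 * r))⁻¹ - s / (s + 2 * r)) / 2) / 2 := by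
        linarith [mul_le_mul_of_nonneg_left hlog (sq_nonneg s)]
    _ = -r ^ 2 := by field_simp; ring

theorem chiSq_upper_tail_general {Ω : Type*} [MeasureSpace Ω]
    (n : ℕ) (g : Fin n → Ω → ℝ)
    (hmeas : ∀ i, Measurable (g i))
    (hindep : iIndepFun g ℙ)
    (hgauss : ∀ i, Measure.map (g i) ℙ = gaussianReal 0 1)
    (x : ℝ) (hx : 0 < x) :
    (ℙ {ω | 2 * Real.sqrt (n * x) + 2 * x ≤ (∑ i, (g i ω) ^ 2) - n}).toReal
      ≤ Real.exp (-x) := by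
  rcases n.eq_zero_or_pos with rfl | hn
  · simp [show ¬2 * x ≤ 0 by linarith, (exp_pos _).le]
  obtain ⟨t, ht0, ht, hexp⟩ := exists_chiSq_chernoff_exponent_le (n := n) (by positivity) hx
  have hchernoff := hindep.measureReal_sum_sq_ge_le hmeas hgauss Finset.univ
    (n + (2 * √(n * x) + 2 * x)) ht0 (by simpa using ht)
  simp only [Finset.card_univ, Fintype.card_fin, NNReal.coe_one, mul_one] at hchernoff
  calc (ℙ {ω | 2 * √(n * x) + 2 * x ≤ (∑ i, g i ω ^ 2) - n}).toReal
      = (ℙ : Measure Ω).real {ω | n + (2 * √(n * x) + 2 * x) ≤ ∑ i, g i ω ^ 2} := by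
        simp_rw [measureReal_def, le_sub_iff_add_le']
    _ ≤ exp (-x) := hchernoff.trans (exp_le_exp.2 hexp)

/-- Laurent–Massart upper-tail bound for a chi-squared random variable with
`n` degrees of freedom, realized as the sum of squares of `n` i.i.d. standard
Gaussian random variables. -/
theorem chiSq_upper_tail {Ω : Type*} [MeasureSpace Ω]
    [IsProbabilityMeasure (ℙ : Measure Ω)]
    (n : ℕ) (g : Fin n → Ω → ℝ)
    (hmeas : ∀ i, Measurable (g i))
    (hindep : iIndepFun g ℙ)
    (hgauss : ∀ i, Measure.map (g i) ℙ = gaussianReal 0 1)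
    (x : ℝ) (hx : 0 < x) :
    (ℙ {ω | 2 * Real.sqrt (n * x) + 2 * x ≤ (∑ i, (g i ω) ^ 2) - n}).toReal
      ≤ Real.exp (-x) :=
  chiSq_upper_tail_general n g hmeas hindep hgauss x hx
end

section
/- The function γ(t) := (t + √(1+t²)) · ( t / (√(1+t²) − 1) )^t is monotonically increasing on (0, ∞). -/
open Real Set

/-!
Since `t / (√(1 + t²) - 1) = (1 + √(1 + t²)) / t = exp (arsinh t⁻¹)` and
`t + √(1 + t²) = exp (arsinh t)`, we have `γ(t) = exp (arsinh t + t · arsinh t⁻¹)`.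
The first summand is increasing; the second is `arsinh x / x` at `x = t⁻¹`, which is
decreasing in `x > 0` because `arsinh` is concave on `[0, ∞)` and vanishes at `0`.
-/

theorem Real.concaveOn_arsinh : ConcaveOn ℝ (Ici 0) arsinh := by
  refine AntitoneOn.concaveOn_of_deriv (convex_Ici 0) continuous_arsinh.continuousOn
    differentiable_arsinh.differentiableOn ?_
  rw [interior_Ici]
  intro x hx y _ hxy
  simp only [(hasDerivAt_arsinh _).deriv]
  gcongr
  exact (mem_Ioi.1 hx).le

theorem ConcaveOn.antitoneOn_div_self {g : ℝ → ℝ} (hg : ConcaveOn ℝ (Ici 0) g) (h0 : g 0 = 0) :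
    AntitoneOn (fun x => g x / x) (Ioi 0) := by
  intro x hx y hy hxy
  have := hg.neg.secant_mono (a := 0) self_mem_Ici (Ioi_subset_Ici_self hx)
    (Ioi_subset_Ici_self hy) (ne_of_gt hx) (ne_of_gt hy) hxy
  simpa [h0, neg_div] using this

theorem Real.monotoneOn_mul_arsinh_inv : MonotoneOn (fun t => t * arsinh t⁻¹) (Ioi 0) := by
  intro a ha b hb hab
  have := concaveOn_arsinh.antitoneOn_div_self arsinh_zero (inv_pos.2 (mem_Ioi.1 hb))
    (inv_pos.2 (mem_Ioi.1 ha)) (inv_anti₀ ha hab)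
  simpa [div_inv_eq_mul, mul_comm] using this

theorem Real.div_sqrt_one_add_sq_sub_one_eq_exp_arsinh_inv {t : ℝ} (ht : 0 < t) :
    t / (√(1 + t ^ 2) - 1) = exp (arsinh t⁻¹) := by
  have hs : 1 < √(1 + t ^ 2) := by
    rw [lt_sqrt zero_le_one]; nlinarith
  have hsq : √(1 + t ^ 2) ^ 2 = 1 + t ^ 2 := sq_sqrt (by positivity)
  have hinv : √(1 + t⁻¹ ^ 2) = √(1 + t ^ 2) / t := by
    rw [show 1 + t⁻¹ ^ 2 = (1 + t ^ 2) / t ^ 2 by field_simp; ring, sqrt_div' _ (sq_nonneg t),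
      sqrt_sq ht.le]
  rw [exp_arsinh, hinv, div_eq_iff (by linarith)]
  field_simp
  linear_combination -hsq

/-- The function `γ(t) = (t + √(1+t²)) · ( t / (√(1+t²) − 1) )^t` is
monotonically increasing on `(0, ∞)`. -/
theorem gamma_fn_monotoneOn :
    MonotoneOn
      (fun t : ℝ => (t + Real.sqrt (1 + t ^ 2)) *
            (t / (Real.sqrt (1 + t ^ 2) - 1)) ^ t)
      (Set.Ioi 0) := by
  have hγ : EqOn (fun t : ℝ => exp (arsinh t + t * arsinh t⁻¹))
      (fun t : ℝ => (t + Real.sqrt (1 + t ^ 2)) * (t / (Real.sqrt (1 + t ^ 2) - 1)) ^ t)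
      (Ioi 0) := fun t ht => by
    dsimp only
    rw [div_sqrt_one_add_sq_sub_one_eq_exp_arsinh_inv ht, ← exp_arsinh, ← exp_mul, ← exp_add,
      mul_comm t]
  refine MonotoneOn.congr ?_ hγ
  exact exp_monotone.comp_monotoneOn
    ((arsinh_strictMono.monotone.monotoneOn _).add monotoneOn_mul_arsinh_inv)
end
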